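/- For a partition λ, an addable box s ∈ A_λ, and a distinct addable box b ∈ A_λ (b ≠ s), the co-transition measures satisfy τ_{λ+s}^b = T₁([s-b]) · τ_λ^b, where τ_μ^a = ∏_{t ∈ R⁺_μ}[a-t] / ∏_{a'∈A_μ, a'≠a}[a-a'] and T₁(x) = x(x+ε₁+ε₂)/((x+ε₁)(x+ε₂)). -/
import Mathlib


noncomputable section

/-- The coefficient field `ℂ(ε₁,ε₂)`, realized as the fraction field of a polynomial
ring in two (transcendental) variables. -/
abbrev Kf : Type := FractionRing (MvPolynomial (Fin 2) ℚ)

/-- The equivariant parameter `ε₁`. -/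
def eps1 : Kf := algebraMap (MvPolynomial (Fin 2) ℚ) Kf (MvPolynomial.X 0)

/-- The equivariant parameter `ε₂`. -/
def eps2 : Kf := algebraMap (MvPolynomial (Fin 2) ℚ) Kf (MvPolynomial.X 1)

/-- The content `[b] = b₁ε₁ + b₂ε₂` of a box `b`. -/
def content (b : ℕ × ℕ) : Kf := (b.1 : Kf) * eps1 + (b.2 : Kf) * eps2

/-- The set `A_Y` of addable boxes (inner corners) of a Young diagram `Y`. -/
def addables (Y : YoungDiagram) : Finset (ℕ × ℕ) :=
  ((Finset.range (Y.cells.card + 1)) ×ˢ (Finset.range (Y.cells.card + 1))).filter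
    (fun c => c ∉ Y.cells ∧ (c.1 = 0 ∨ (c.1 - 1, c.2) ∈ Y.cells) ∧
      (c.2 = 0 ∨ (c.1, c.2 - 1) ∈ Y.cells))

/-- The set `R_Y` of removable boxes of a Young diagram `Y`. -/
def removables (Y : YoungDiagram) : Finset (ℕ × ℕ) :=
  Y.cells.filter fun c => (c.1 + 1, c.2) ∉ Y.cells ∧ (c.1, c.2 + 1) ∉ Y.cells

/-- The set `R⁺_Y = {t + (1,1) : t ∈ R_Y}` of outer corners of `Y`. -/
def outers (Y : YoungDiagram) : Finset (ℕ × ℕ) :=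
  (removables Y).image fun c => (c.1 + 1, c.2 + 1)

/-- Kerov's co-transition measure
`τ_Y^a = ∏_{t∈R⁺_Y}[a-t] / ∏_{a'∈A_Y, a'≠a}[a-a']` at an addable box `a`. -/
def tau (Y : YoungDiagram) (a : ℕ × ℕ) : Kf :=
  (∏ t ∈ outers Y, (content a - content t)) /
    ∏ a' ∈ (addables Y).erase a, (content a - content a')

/-- `T₁(x) = x(x+ε₁+ε₂)/((x+ε₁)(x+ε₂))`. -/
def T1 (x : Kf) : Kf := x * (x + eps1 + eps2) / ((x + eps1) * (x + eps2))

lemma content_injective : Function.Injective content := by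
  intro a b h
  have hker : Function.Injective (algebraMap (MvPolynomial (Fin 2) ℚ) Kf) :=
    IsFractionRing.injective _ _
  have h2 : ((a.1 : MvPolynomial (Fin 2) ℚ) * MvPolynomial.X 0 + (a.2 : MvPolynomial (Fin 2) ℚ) * MvPolynomial.X 1)
      = ((b.1 : MvPolynomial (Fin 2) ℚ) * MvPolynomial.X 0 + (b.2 : MvPolynomial (Fin 2) ℚ) * MvPolynomial.X 1) := by
    apply hker
    simpa [content, eps1, eps2, map_add, map_mul, map_natCast] using h
  have e1 := congrArg (MvPolynomial.eval (fun k : Fin 2 => if k = 0 then (1:ℚ) else 0)) h2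
  have e2 := congrArg (MvPolynomial.eval (fun k : Fin 2 => if k = 0 then (0:ℚ) else 1)) h2
  simp at e1 e2
  exact Prod.ext (by exact_mod_cast e1) (by exact_mod_cast e2)

lemma bound_row (Y : YoungDiagram) (c : ℕ × ℕ) (h : c.1 = 0 ∨ (c.1 - 1, c.2) ∈ Y.cells) :
    c.1 < Y.cells.card + 1 := by
  rcases h with h | h
  · omega
  · have hsub : (Finset.range c.1).image (fun r => (r, c.2)) ⊆ Y.cells := by
      intro x hx
      simp only [Finset.mem_image, Finset.mem_range] at hx
      obtain ⟨r, hr, rfl⟩ := hx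
      exact Y.up_left_mem (by omega) le_rfl h
    have h2 := Finset.card_le_card hsub
    rw [Finset.card_image_of_injective _ (fun x y hxy => by simpa using hxy),
      Finset.card_range] at h2
    omega

lemma bound_col (Y : YoungDiagram) (c : ℕ × ℕ) (h : c.2 = 0 ∨ (c.1, c.2 - 1) ∈ Y.cells) :
    c.2 < Y.cells.card + 1 := by
  rcases h with h | h
  · omega
  · have hsub : (Finset.range c.2).image (fun r => (c.1, r)) ⊆ Y.cells := by
      intro x hx
      simp only [Finset.mem_image, Finset.mem_range] at hx
      obtain ⟨r, hr, rfl⟩ := hx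
      exact Y.up_left_mem le_rfl (by omega) h
    have h2 := Finset.card_le_card hsub
    rw [Finset.card_image_of_injective _ (fun x y hxy => by simpa using hxy),
      Finset.card_range] at h2
    omega

lemma mem_addables_iff {Y : YoungDiagram} {c : ℕ × ℕ} :
    c ∈ addables Y ↔ c ∉ Y.cells ∧ (c.1 = 0 ∨ (c.1 - 1, c.2) ∈ Y.cells) ∧
      (c.2 = 0 ∨ (c.1, c.2 - 1) ∈ Y.cells) := by
  unfold addables
  simp only [Finset.mem_filter, Finset.mem_product, Finset.mem_range]
  constructor
  · tauto
  · intro h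
    exact ⟨⟨bound_row _ _ h.2.1, bound_col _ _ h.2.2⟩, h⟩

lemma mem_outers_iff {Y : YoungDiagram} {c : ℕ × ℕ} :
    c ∈ outers Y ↔ 1 ≤ c.1 ∧ 1 ≤ c.2 ∧ (c.1 - 1, c.2 - 1) ∈ Y.cells ∧
      (c.1, c.2 - 1) ∉ Y.cells ∧ (c.1 - 1, c.2) ∉ Y.cells := by
  unfold outers removables
  simp only [Finset.mem_image, Finset.mem_filter]
  constructor
  · rintro ⟨t, ⟨ht, h1, h2⟩, rfl⟩
    refine ⟨by omega, by omega, by simpa using ht, by simpa using h1, by simpa using h2⟩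
  · rintro ⟨h1, h2, h3, h4, h5⟩
    refine ⟨(c.1 - 1, c.2 - 1), ⟨h3, ?_, ?_⟩, ?_⟩
    · simpa [Nat.sub_add_cancel h1] using h4
    · simpa [Nat.sub_add_cancel h2] using h5
    · ext <;> simp <;> omega

lemma addables_insert (Y Y' : YoungDiagram) (s : ℕ × ℕ) (hs : s ∈ addables Y)
    (hY' : Y'.cells = insert s Y.cells) :
    addables Y' = ((addables Y).erase s) ∪
      (({(s.1+1, s.2), (s.1, s.2+1)} : Finset (ℕ × ℕ)).filter (fun c => c ∉ outers Y)) := by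
  obtain ⟨hsY, hsrow, hscol⟩ := mem_addables_iff.mp hs
  have hP1Y : (s.1+1, s.2) ∉ Y.cells := fun h => hsY (Y.up_left_mem (Nat.le_succ _) le_rfl h)
  have hP2Y : (s.1, s.2+1) ∉ Y.cells := fun h => hsY (Y.up_left_mem le_rfl (Nat.le_succ _) h)
  obtain ⟨i, j⟩ := s
  ext ⟨c1, c2⟩
  simp only [mem_addables_iff, mem_outers_iff, hY', Finset.mem_erase, Finset.mem_union,
    Finset.mem_filter, Finset.mem_insert, Finset.mem_singleton, Prod.mk.injEq] at *
  by_cases h1 : c1 = i + 1 ∧ c2 = j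
  · obtain ⟨rfl, rfl⟩ := h1
    have e1 : i + 1 ≠ i := by omega
    have e2 : ¬ (c2 = c2 + 1) := by omega
    simp [e1, e2, hsY, hP1Y]
    constructor
    · rintro (h0 | hm) h1c _
      · omega
      · exact hm
    · intro himp
      by_cases h0 : c2 = 0
      · exact Or.inl h0
      · exact Or.inr (himp (by omega) (hscol.resolve_left h0))
  by_cases h2 : c1 = i ∧ c2 = j + 1
  · obtain ⟨rfl, rfl⟩ := h2
    have e1 : j + 1 ≠ j := by omega
    have e2 : ¬ (c1 = c1 + 1) := by omega
    simp [e1, e2, hsY, hP2Y]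
    constructor
    · rintro (h0 | hm) h1c _
      · omega
      · exact hm
    · intro himp
      by_cases h0 : c1 = 0
      · exact Or.inl h0
      · exact Or.inr (himp (by omega) (hsrow.resolve_left h0))
  · constructor
    · rintro ⟨hne, hr, hc⟩
      push_neg at hne
      refine Or.inl ⟨?_, hne.2, ?_, ?_⟩
      · simp only [ne_eq, Prod.mk.injEq, not_and]
        exact hne.1
      · rcases hr with h | h | h
        · exact Or.inl h
        · by_cases h0 : c1 = 0
          · exact Or.inl h0
          · exact absurd ⟨by omega, h.2⟩ h1
        · exact Or.inr h
      · rcases hc with h | h | h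
        · exact Or.inl h
        · by_cases h0 : c2 = 0
          · exact Or.inl h0
          · exact absurd ⟨h.1, by omega⟩ h2
        · exact Or.inr h
    · rintro (⟨hne, hmem, hr, hc⟩ | ⟨hp, -⟩)
      · simp only [ne_eq, Prod.mk.injEq] at hne
        refine ⟨?_, ?_, ?_⟩
        · rintro (h | h)
          · exact hne h
          · exact hmem h
        · rcases hr with h | h
          · exact Or.inl h
          · exact Or.inr (Or.inr h)
        · rcases hc with h | h
          · exact Or.inl h
          · exact Or.inr (Or.inr h)
      · rcases hp with h | h
        · exact absurd h h1
        · exact absurd h h2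

lemma outers_insert (Y Y' : YoungDiagram) (s : ℕ × ℕ) (hs : s ∈ addables Y)
    (hY' : Y'.cells = insert s Y.cells) :
    outers Y' = insert (s.1+1, s.2+1)
      ((outers Y).filter (fun c => c ∉ ({(s.1+1, s.2), (s.1, s.2+1)} : Finset (ℕ × ℕ)))) := by
  obtain ⟨hsY, hsrow, hscol⟩ := mem_addables_iff.mp hs
  have hP1Y : (s.1+1, s.2) ∉ Y.cells := fun h => hsY (Y.up_left_mem (Nat.le_succ _) le_rfl h)
  have hP2Y : (s.1, s.2+1) ∉ Y.cells := fun h => hsY (Y.up_left_mem le_rfl (Nat.le_succ _) h)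
  obtain ⟨i, j⟩ := s
  ext ⟨c1, c2⟩
  simp only [mem_outers_iff, hY', Finset.mem_insert, Finset.mem_filter,
    Finset.mem_singleton, Prod.mk.injEq] at *
  by_cases hO : c1 = i + 1 ∧ c2 = j + 1
  · obtain ⟨rfl, rfl⟩ := hO
    simp only [Nat.add_sub_cancel]
    simp [hsY, hP1Y, hP2Y]
  by_cases h1 : c1 = i + 1 ∧ c2 = j
  · obtain ⟨rfl, rfl⟩ := h1
    simp only [Nat.add_sub_cancel]
    simp
  by_cases h2 : c1 = i ∧ c2 = j + 1
  · obtain ⟨rfl, rfl⟩ := h2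
    simp only [Nat.add_sub_cancel]
    simp
  · constructor
    · rintro ⟨hc1, hc2, hm, hn1, hn2⟩
      refine Or.inr ⟨⟨hc1, hc2, ?_, ?_, ?_⟩, ?_⟩
      · rcases hm with h | h
        · exact absurd ⟨by omega, by omega⟩ hO
        · exact h
      · exact fun h => hn1 (Or.inr h)
      · exact fun h => hn2 (Or.inr h)
      · rintro (⟨ha, hb⟩ | ⟨ha, hb⟩)
        · exact h1 ⟨ha, hb⟩
        · exact h2 ⟨ha, hb⟩
    · rintro (⟨ha, hb⟩ | ⟨⟨hc1, hc2, hm, hn1, hn2⟩, -⟩)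
      · exact absurd ⟨ha, hb⟩ hO
      · refine ⟨hc1, hc2, Or.inr hm, ?_, ?_⟩
        · rintro (⟨ha, hb⟩ | h)
          · exact h2 ⟨ha, by omega⟩
          · exact hn1 h
        · rintro (⟨ha, hb⟩ | h)
          · exact h1 ⟨by omega, hb⟩
          · exact hn2 h
lemma content_injective' : Function.Injective content := content_injective

lemma content_sub_ne_zero {a b : ℕ × ℕ} (h : a ≠ b) : content a - content b ≠ 0 :=
  sub_ne_zero.mpr fun hc => h (content_injective hc)

lemma content_add_one_fst (a : ℕ × ℕ) : content (a.1 + 1, a.2) = content a + eps1 := by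
  simp only [content]
  push_cast
  ring

lemma content_add_one_snd (a : ℕ × ℕ) : content (a.1, a.2 + 1) = content a + eps2 := by
  simp only [content]
  push_cast
  ring

lemma content_add_one_both (a : ℕ × ℕ) :
    content (a.1 + 1, a.2 + 1) = content a + eps1 + eps2 := by
  simp only [content]
  push_cast
  ring

set_option maxHeartbeats 1000000 in
/-- for a partition `λ`, an addable box `s ∈ A_λ` and a distinct addable
box `b ∈ A_λ` (`b ≠ s`), the co-transition measures satisfy
`τ_{λ+s}^b = T₁([s-b]) · τ_λ^b`.  Here `λ+s` is the Young diagram whose cell set is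
that of `λ` with the box `s` inserted. -/
theorem tau_add_box (Y Y' : YoungDiagram) (s b : ℕ × ℕ)
    (hs : s ∈ addables Y) (hY' : Y'.cells = insert s Y.cells)
    (hb : b ∈ addables Y) (hbs : b ≠ s) :
    tau Y' b = T1 (content s - content b) * tau Y b := by
  obtain ⟨hsY, hsrow, hscol⟩ := mem_addables_iff.mp hs
  obtain ⟨hbY, hbrow, hbcol⟩ := mem_addables_iff.mp hb
  -- b is none of the special boxes
  have hbP1 : b ≠ (s.1 + 1, s.2) := by
    rintro rfl
    rcases hbrow with h | h
    · simp at h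
    · simp only [Nat.add_sub_cancel] at h
      exact hsY (by simpa using h)
  have hbP2 : b ≠ (s.1, s.2 + 1) := by
    rintro rfl
    rcases hbcol with h | h
    · simp at h
    · simp only [Nat.add_sub_cancel] at h
      exact hsY (by simpa using h)
  have hP12 : ((s.1 + 1, s.2) : ℕ × ℕ) ≠ (s.1, s.2 + 1) := by simp
  -- P1, P2 not addable in Y
  have hP1A : ((s.1 + 1, s.2) : ℕ × ℕ) ∉ addables Y := by
    intro h
    rcases (mem_addables_iff.mp h).2.1 with h' | h'
    · simp at h'
    · simp only [Nat.add_sub_cancel] at h'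
      exact hsY (by simpa using h')
  have hP2A : ((s.1, s.2 + 1) : ℕ × ℕ) ∉ addables Y := by
    intro h
    rcases (mem_addables_iff.mp h).2.2 with h' | h'
    · simp at h'
    · simp only [Nat.add_sub_cancel] at h'
      exact hsY (by simpa using h')
  -- O11 not an outer of Y
  have hO11O : ((s.1 + 1, s.2 + 1) : ℕ × ℕ) ∉ outers Y := by
    intro h
    obtain ⟨-, -, h3, -, -⟩ := mem_outers_iff.mp h
    simp only [Nat.add_sub_cancel] at h3
    exact hsY (by simpa using h3)
  set x : Kf := content s - content b with hxdef
  -- content values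
  have hfs : content b - content s = -x := by rw [hxdef]; ring
  have hfP1 : content b - content (s.1 + 1, s.2) = -(x + eps1) := by
    rw [content_add_one_fst, hxdef]; ring
  have hfP2 : content b - content (s.1, s.2 + 1) = -(x + eps2) := by
    rw [content_add_one_snd, hxdef]; ring
  have hfO11 : content b - content (s.1 + 1, s.2 + 1) = -(x + eps1 + eps2) := by
    rw [content_add_one_both, hxdef]; ring
  -- nonvanishing
  have hx : x ≠ 0 := by
    rw [hxdef]
    exact content_sub_ne_zero fun h => hbs h.symm
  have hx1 : x + eps1 ≠ 0 := by
    intro hc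
    apply content_sub_ne_zero hbP1
    rw [hfP1, hc, neg_zero]
  have hx2 : x + eps2 ≠ 0 := by
    intro hc
    apply content_sub_ne_zero hbP2
    rw [hfP2, hc, neg_zero]
  -- abbreviations for products
  set S : Kf := ∏ t ∈ (outers Y).filter
      (fun c => c ∈ ({(s.1 + 1, s.2), (s.1, s.2 + 1)} : Finset (ℕ × ℕ))),
      (content b - content t) with hSdef
  set N2 : Kf := ∏ t ∈ (outers Y).filter
      (fun c => c ∉ ({(s.1 + 1, s.2), (s.1, s.2 + 1)} : Finset (ℕ × ℕ))),
      (content b - content t) with hN2def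
  set Q : Kf := ∏ t ∈ ({(s.1 + 1, s.2), (s.1, s.2 + 1)} : Finset (ℕ × ℕ)).filter
      (fun c => c ∉ outers Y), (content b - content t) with hQdef
  set D2 : Kf := ∏ t ∈ ((addables Y).erase b).erase s, (content b - content t) with hD2def
  -- numerator of tau Y
  have hnumY : ∏ t ∈ outers Y, (content b - content t) = S * N2 :=
    (Finset.prod_filter_mul_prod_filter_not (outers Y)
      (fun c => c ∈ ({(s.1 + 1, s.2), (s.1, s.2 + 1)} : Finset (ℕ × ℕ)))
      (fun t => content b - content t)).symm
  -- key pairing identity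
  have hSQ : S * Q = (x + eps1) * (x + eps2) := by
    have hflip : (outers Y).filter
        (fun c => c ∈ ({(s.1 + 1, s.2), (s.1, s.2 + 1)} : Finset (ℕ × ℕ)))
        = ({(s.1 + 1, s.2), (s.1, s.2 + 1)} : Finset (ℕ × ℕ)).filter
          (fun c => c ∈ outers Y) := by
      ext c
      simp only [Finset.mem_filter]
      tauto
    have h := Finset.prod_filter_mul_prod_filter_not
      ({(s.1 + 1, s.2), (s.1, s.2 + 1)} : Finset (ℕ × ℕ)) (fun c => c ∈ outers Y)
      (fun t => content b - content t)
    rw [hSdef, hQdef, hflip, h, Finset.prod_pair hP12, hfP1, hfP2]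
    ring
  -- denominator of tau Y
  have hsmem : s ∈ (addables Y).erase b := Finset.mem_erase.mpr ⟨fun h => hbs h.symm, hs⟩
  have hdenY : ∏ a' ∈ (addables Y).erase b, (content b - content a') = (-x) * D2 := by
    rw [← Finset.mul_prod_erase _ _ hsmem, hfs, hD2def]
  -- numerator of tau Y'
  have hnumY' : ∏ t ∈ outers Y', (content b - content t) = -(x + eps1 + eps2) * N2 := by
    rw [outers_insert Y Y' s hs hY']
    rw [Finset.prod_insert (by
      simp only [Finset.mem_filter]
      rintro ⟨h, -⟩
      exact hO11O h)]
    rw [hfO11, hN2def]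
  -- denominator of tau Y'
  have herase : (addables Y').erase b =
      (((addables Y).erase b).erase s) ∪
        ({(s.1 + 1, s.2), (s.1, s.2 + 1)} : Finset (ℕ × ℕ)).filter
          (fun c => c ∉ outers Y) := by
    rw [addables_insert Y Y' s hs hY', Finset.erase_union_distrib]
    congr 1
    · exact Finset.erase_right_comm
    · apply Finset.erase_eq_of_notMem
      simp only [Finset.mem_filter, Finset.mem_insert, Finset.mem_singleton]
      rintro ⟨h | h, -⟩
      · exact hbP1 h
      · exact hbP2 h
  have hdisj : Disjoint (((addables Y).erase b).erase s)
      (({(s.1 + 1, s.2), (s.1, s.2 + 1)} : Finset (ℕ × ℕ)).filter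
        (fun c => c ∉ outers Y)) := by
    rw [Finset.disjoint_left]
    intro c hc hc'
    have hcA : c ∈ addables Y := Finset.mem_of_mem_erase (Finset.mem_of_mem_erase hc)
    rcases Finset.mem_insert.mp (Finset.mem_filter.mp hc').1 with h | h
    · exact hP1A (h ▸ hcA)
    · exact hP2A ((Finset.mem_singleton.mp h) ▸ hcA)
  have hdenY' : ∏ a' ∈ (addables Y').erase b, (content b - content a') = D2 * Q := by
    rw [herase, Finset.prod_union hdisj, hD2def, hQdef]
  -- nonvanishing of products
  have hD2ne : D2 ≠ 0 := by
    rw [hD2def]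
    apply Finset.prod_ne_zero_iff.mpr
    intro a' ha'
    exact content_sub_ne_zero (Finset.ne_of_mem_erase (Finset.mem_of_mem_erase ha')).symm
  have hQne : Q ≠ 0 := by
    rw [hQdef]
    apply Finset.prod_ne_zero_iff.mpr
    intro a' ha'
    rcases Finset.mem_insert.mp (Finset.mem_filter.mp ha').1 with h | h
    · rw [h]
      exact content_sub_ne_zero hbP1
    · rw [Finset.mem_singleton.mp h]
      exact content_sub_ne_zero hbP2
  -- final computation
  unfold tau T1
  rw [hnumY', hdenY', hnumY, hdenY]
  rw [div_mul_div_comm, div_eq_div_iff (mul_ne_zero hD2ne hQne)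
    (mul_ne_zero (mul_ne_zero hx1 hx2) (mul_ne_zero (neg_ne_zero.mpr hx) hD2ne))]
  linear_combination (-(x * (x + eps1 + eps2) * N2 * D2)) * hSQ

end
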